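/- arXiv:1410.8078 — 2 statements merged into one kernel-verified Lean document; each statement's English description precedes it below -/
import Mathlib

section
/- (Ahlswede's robustification) Let $\mathcal{S}$ be a finite set and $n$ a positive integer. Suppose $f:\mathcal{S}^n\to[0,1]$ satisfies $\sum_{s^n\in\mathcal{S}^n} f(s^n)\, q(s_1)\cdots q(s_n) \geq 1-\varepsilon$ for every type $q\in\mathcal{P}_0^n(\mathcal{S})$ and some $\varepsilon\in[0,1]$. Then for every $s^n\in\mathcal{S}^n$, $\frac{1}{n!}\sum_{\pi\in\Pi_n} f(\pi(s^n)) \geq 1 - 3(n+1)^{|\mathcal{S}|}\varepsilon$. -/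
/-!
Let `q` be the type of `s`. Under `qⁿ` all sequences of a type class are equally likely, so the
permutation average of `f` at `s` is the `qⁿ`-conditional mean of `f` on the type class `T` of
`s`. Since `f ≤ 1`, the hypothesis at `q` gives `qⁿ(T) - ε ≤ qⁿ(T) · (mean of f on T)`. Finally
`T` is the most likely type class under `qⁿ`, and there are at most `(n+1)^|S|` type classes, so
`qⁿ(T) ≥ (n+1)^{-|S|}`.
-/

open Finset Equiv
open scoped Nat

theorem Nat.factorial_mul_pow_le_factorial_mul_pow_self (m k : ℕ) :
    m ! * m ^ k ≤ k ! * m ^ m := by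
  rcases le_total k m with h | h
  · have hm : k ! * m.descFactorial (m - k) = m ! := by
      simpa [Nat.sub_sub_self h] using Nat.factorial_mul_descFactorial (Nat.sub_le m k)
    calc m ! * m ^ k ≤ k ! * m ^ (m - k) * m ^ k := by
          rw [← hm]; gcongr; exact Nat.descFactorial_le_pow m _
      _ = k ! * m ^ m := by rw [mul_assoc, ← pow_add, Nat.sub_add_cancel h]
  · calc m ! * m ^ k = m ! * m ^ (k - m) * m ^ m := by
          rw [mul_assoc, ← pow_add, Nat.sub_add_cancel h]
      _ ≤ k ! * m ^ m := by gcongr; exact Nat.factorial_mul_pow_sub_le_factorial h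

section TypeClass

variable {ι S : Type*} [Fintype ι] [DecidableEq S]

def typeCount (t : ι → S) (a : S) : ℕ := #{i | t i = a}

lemma typeCount_eq_card_subtype (t : ι → S) (a : S) :
    typeCount t a = Fintype.card {i // t i = a} :=
  (Fintype.card_subtype _).symm

lemma typeCount_le_card (t : ι → S) (a : S) : typeCount t a ≤ Fintype.card ι :=
  card_le_univ _

lemma typeCount_comp_perm (t : ι → S) (π : Perm ι) : typeCount (t ∘ π) = typeCount t := by
  funext a
  simp only [typeCount_eq_card_subtype]
  exact Fintype.card_congr (π.subtypeEquiv fun _ => Iff.rfl)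

noncomputable def empiricalDist (t : ι → S) (a : S) : ℝ := typeCount t a / Fintype.card ι

lemma empiricalDist_nonneg (t : ι → S) (a : S) : 0 ≤ empiricalDist t a := by
  unfold empiricalDist; positivity

variable [Fintype S]

lemma sum_typeCount (t : ι → S) : ∑ a, typeCount t a = Fintype.card ι :=
  (card_eq_sum_card_fiberwise fun i _ => mem_univ (t i)).symm

lemma prod_comp_eq_prod_pow_typeCount {M : Type*} [CommMonoid M] (q : S → M) (t : ι → S) :
    ∏ i, q (t i) = ∏ a, q a ^ typeCount t a := by
  rw [← prod_fiberwise' univ t q]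
  simp [typeCount]

variable [DecidableEq ι]

lemma card_image_typeCount_le :
    #(univ.image (typeCount : (ι → S) → S → ℕ)) ≤ (Fintype.card ι + 1) ^ Fintype.card S := by
  calc #(univ.image (typeCount : (ι → S) → S → ℕ))
      ≤ #(Fintype.piFinset fun _ : S => range (Fintype.card ι + 1)) := by
        refine card_le_card fun m hm => ?_
        obtain ⟨t, -, rfl⟩ := mem_image.1 hm
        simpa [Nat.lt_succ_iff] using typeCount_le_card t
    _ = (Fintype.card ι + 1) ^ Fintype.card S := by simp

def typeClass (t : ι → S) : Finset (ι → S) := {u | typeCount u = typeCount t}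

lemma mem_typeClass {t u : ι → S} : u ∈ typeClass t ↔ typeCount u = typeCount t := by
  simp [typeClass]

lemma prod_comp_eq_of_mem_typeClass {M : Type*} [CommMonoid M] (q : S → M) {t u : ι → S}
    (hu : u ∈ typeClass t) : ∏ i, q (u i) = ∏ i, q (t i) := by
  rw [prod_comp_eq_prod_pow_typeCount, prod_comp_eq_prod_pow_typeCount, mem_typeClass.1 hu]

lemma exists_perm_comp_eq_of_mem_typeClass {t u : ι → S} (hu : u ∈ typeClass t) :
    ∃ π : Perm ι, t ∘ π = u := by
  have e : ∀ a, {i // u i = a} ≃ {i // t i = a} := fun a =>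
    Fintype.equivOfCardEq <| by
      rw [← typeCount_eq_card_subtype, ← typeCount_eq_card_subtype, mem_typeClass.1 hu]
  exact ⟨ofFiberEquiv e, funext (ofFiberEquiv_map e)⟩

lemma card_perm_comp_eq {t u : ι → S} (hu : u ∈ typeClass t) :
    #{π : Perm ι | t ∘ π = u} = ∏ a, (typeCount t a)! := by
  obtain ⟨π₀, rfl⟩ := exists_perm_comp_eq_of_mem_typeClass hu
  have e : {π : Perm ι // t ∘ π = t ∘ π₀} ≃ {σ : Perm ι // t ∘ σ = t} :=
    (Equiv.mulRight π₀⁻¹).subtypeEquiv fun π => by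
      constructor <;> intro h <;> funext i
      · simpa using congrFun h (π₀⁻¹ i)
      · simpa using congrFun h (π₀ i)
  rw [← Fintype.card_subtype, Fintype.card_congr e, DomMulAct.stabilizer_card]
  simp only [typeCount_eq_card_subtype]

lemma sum_perm_comp {M : Type*} [AddCommMonoid M] (t : ι → S) (f : (ι → S) → M) :
    ∑ π : Perm ι, f (t ∘ π) = (∏ a, (typeCount t a)!) • ∑ u ∈ typeClass t, f u := by
  rw [← sum_fiberwise_of_maps_to (g := fun π : Perm ι => t ∘ π) (t := typeClass t)
    (fun π _ => mem_typeClass.2 (typeCount_comp_perm t π)), smul_sum]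
  refine sum_congr rfl fun u hu => ?_
  rw [sum_congr rfl fun π hπ => congrArg f (mem_filter.1 hπ).2, sum_const, card_perm_comp_eq hu]

lemma card_typeClass_mul_prod_factorial (t : ι → S) :
    #(typeClass t) * ∏ a, (typeCount t a)! = (Fintype.card ι)! := by
  simpa [Fintype.card_perm, mul_comm] using (sum_perm_comp t fun _ => (1 : ℕ)).symm

lemma card_typeClass_mul_prod_pow_le (s t : ι → S) :
    #(typeClass t) * ∏ a, typeCount s a ^ typeCount t a
      ≤ #(typeClass s) * ∏ a, typeCount s a ^ typeCount s a := by
  set m := typeCount s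
  set k := typeCount t
  refine Nat.le_of_mul_le_mul_right (c := (∏ a, (k a)!) * ∏ a, (m a)!) ?_ (by positivity)
  calc (#(typeClass t) * ∏ a, m a ^ k a) * ((∏ a, (k a)!) * ∏ a, (m a)!)
      = (#(typeClass t) * ∏ a, (k a)!) * ∏ a, ((m a)! * m a ^ k a) := by
        rw [prod_mul_distrib]; ring
    _ ≤ (#(typeClass t) * ∏ a, (k a)!) * ∏ a, ((k a)! * m a ^ m a) := by
        gcongr _ * ?_
        exact prod_le_prod' fun a _ => Nat.factorial_mul_pow_le_factorial_mul_pow_self (m a) (k a)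
    _ = (#(typeClass s) * ∏ a, (m a)!) * ∏ a, ((k a)! * m a ^ m a) := by
        rw [card_typeClass_mul_prod_factorial, card_typeClass_mul_prod_factorial]
    _ = (#(typeClass s) * ∏ a, m a ^ m a) * ((∏ a, (k a)!) * ∏ a, (m a)!) := by
        rw [prod_mul_distrib]; ring

lemma sum_prod_empiricalDist [Nonempty ι] (s : ι → S) :
    ∑ u : ι → S, ∏ i, empiricalDist s (u i) = 1 := by
  have hsum : ∑ a, empiricalDist s a = 1 := by
    simp only [empiricalDist, ← sum_div, ← Nat.cast_sum, sum_typeCount]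
    exact div_self (by positivity)
  rw [← Fintype.prod_sum, hsum, prod_const_one]

lemma sum_typeClass_prod_empiricalDist (s t : ι → S) :
    ∑ u ∈ typeClass t, ∏ i, empiricalDist s (u i)
      = (#(typeClass t) * ∏ a, typeCount s a ^ typeCount t a : ℕ)
          / (Fintype.card ι : ℝ) ^ Fintype.card ι := by
  rw [sum_congr rfl fun u hu => prod_comp_eq_of_mem_typeClass _ hu, sum_const, nsmul_eq_mul,
    prod_comp_eq_prod_pow_typeCount]
  simp only [empiricalDist, div_pow, prod_div_distrib, prod_pow_eq_pow_sum, sum_typeCount]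
  push_cast
  ring

lemma sum_typeClass_prod_empiricalDist_le (s t : ι → S) :
    ∑ u ∈ typeClass t, ∏ i, empiricalDist s (u i)
      ≤ ∑ u ∈ typeClass s, ∏ i, empiricalDist s (u i) := by
  rw [sum_typeClass_prod_empiricalDist, sum_typeClass_prod_empiricalDist]
  gcongr ?_ / _
  exact_mod_cast card_typeClass_mul_prod_pow_le s t

lemma one_le_mul_sum_typeClass_prod_empiricalDist [Nonempty ι] (s : ι → S) :
    1 ≤ ((Fintype.card ι : ℝ) + 1) ^ Fintype.card S
      * ∑ u ∈ typeClass s, ∏ i, empiricalDist s (u i) := by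
  set P : (ι → S) → ℝ := fun u => ∏ i, empiricalDist s (u i)
  have hfiber : ∀ m ∈ univ.image (typeCount : (ι → S) → S → ℕ),
      ∑ u with typeCount u = m, P u ≤ ∑ u ∈ typeClass s, P u := by
    intro m hm
    obtain ⟨t, -, rfl⟩ := mem_image.1 hm
    exact sum_typeClass_prod_empiricalDist_le s t
  calc (1 : ℝ) = ∑ u, P u := (sum_prod_empiricalDist s).symm
    _ = ∑ m ∈ univ.image typeCount, ∑ u with typeCount u = m, P u :=
        (sum_fiberwise_of_maps_to (fun u _ => mem_image_of_mem _ (mem_univ u)) P).symm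
    _ ≤ #(univ.image (typeCount : (ι → S) → S → ℕ)) * ∑ u ∈ typeClass s, P u := by
        simpa using sum_le_card_nsmul _ _ _ hfiber
    _ ≤ ((Fintype.card ι : ℝ) + 1) ^ Fintype.card S * ∑ u ∈ typeClass s, P u := by
        gcongr
        · exact sum_nonneg fun u _ => prod_nonneg fun i _ => empiricalDist_nonneg s _
        · exact_mod_cast card_image_typeCount_le

end TypeClass

lemma one_sub_div_le_sum_div_card {α : Type*} [Fintype α] [DecidableEq α] {P f : α → ℝ}
    (hP : ∀ x, 0 ≤ P x) (hP1 : ∑ x, P x = 1) (hf : ∀ x, f x ≤ 1) {C : Finset α}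
    (hPC : ∀ x ∈ C, ∀ y ∈ C, P x = P y) (hCpos : 0 < ∑ x ∈ C, P x) {ε : ℝ}
    (h : 1 - ε ≤ ∑ x, f x * P x) :
    1 - ε / ∑ x ∈ C, P x ≤ (∑ x ∈ C, f x) / #C := by
  obtain ⟨x₀, hx₀⟩ : C.Nonempty := nonempty_of_sum_ne_zero hCpos.ne'
  have hPC' : ∑ x ∈ C, P x = #C * P x₀ := by
    rw [sum_congr rfl fun x hx => hPC x hx x₀ hx₀, sum_const, nsmul_eq_mul]
  have hfC : ∑ x ∈ C, f x * P x = P x₀ * ∑ x ∈ C, f x := by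
    rw [mul_sum]; exact sum_congr rfl fun x hx => by rw [hPC x hx x₀ hx₀, mul_comm]
  have hfCc : ∑ x ∈ Cᶜ, f x * P x ≤ ∑ x ∈ Cᶜ, P x :=
    sum_le_sum fun x _ => mul_le_of_le_one_left (hP x) (hf x)
  have hPCc : ∑ x ∈ Cᶜ, P x = 1 - ∑ x ∈ C, P x := by
    rw [← hP1, ← sum_add_sum_compl C P]; ring
  have hK : (0 : ℝ) < #C := by exact_mod_cast card_pos.2 ⟨x₀, hx₀⟩
  have hc : 0 < P x₀ := pos_of_mul_pos_right (hPC' ▸ hCpos) hK.le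
  have key : #C * P x₀ - ε ≤ P x₀ * ∑ x ∈ C, f x := by
    linarith [sum_add_sum_compl C fun x => f x * P x]
  rw [hPC']
  calc 1 - ε / (#C * P x₀) = (#C * P x₀ - ε) / (#C * P x₀) := by field_simp
    _ ≤ P x₀ * (∑ x ∈ C, f x) / (#C * P x₀) := by gcongr
    _ = (∑ x ∈ C, f x) / #C := by field_simp

/-- Ahlswede's robustification technique: if `f : S^n → [0,1]` satisfies
`∑_{s^n} f(s^n) q(s_1)⋯q(s_n) ≥ 1 - ε` for every type `q` of a length-`n` sequence
(`q(a) = N(a|t^n)/n` for some `t^n ∈ S^n`), then for every `s^n ∈ S^n`,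
`(1/n!) ∑_{π ∈ Π_n} f(π(s^n)) ≥ 1 - 3(n+1)^{|S|} ε`. -/
theorem stmt2 {S : Type*} [Fintype S] [DecidableEq S] (n : ℕ) (hn : 0 < n)
    (f : (Fin n → S) → ℝ) (hf : ∀ s, f s ∈ Set.Icc (0:ℝ) 1)
    (ε : ℝ) (hε : ε ∈ Set.Icc (0:ℝ) 1)
    (hyp : ∀ t : Fin n → S,
      ∑ s : Fin n → S,
        f s * ∏ i, ((Finset.univ.filter (fun j => t j = s i)).card : ℝ) / n
      ≥ 1 - ε) :
    ∀ s : Fin n → S,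
      (1 / (n.factorial : ℝ)) * ∑ π : Equiv.Perm (Fin n), f (fun i => s (π i))
        ≥ 1 - 3 * (n + 1) ^ (Fintype.card S) * ε := by
  intro s
  have : Nonempty (Fin n) := Fin.pos_iff_nonempty.1 hn
  set P : (Fin n → S) → ℝ := fun u => ∏ i, empiricalDist s (u i)
  have hC : 1 ≤ ((n : ℝ) + 1) ^ Fintype.card S * ∑ u ∈ typeClass s, P u := by
    simpa using one_le_mul_sum_typeClass_prod_empiricalDist s
  have hCpos : 0 < ∑ u ∈ typeClass s, P u := 
    pos_of_mul_pos_right (a := ((n : ℝ) + 1) ^ Fintype.card S) (by linarith) (by positivity)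
  have havg := one_sub_div_le_sum_div_card (P := P) (f := f)
    (fun u => prod_nonneg fun i _ => empiricalDist_nonneg s _)
    (sum_prod_empiricalDist s) (fun u => (hf u).2)
    (fun u hu v hv => (prod_comp_eq_of_mem_typeClass _ hu).trans
      (prod_comp_eq_of_mem_typeClass _ hv).symm)
    hCpos (by simpa [P, empiricalDist, typeCount] using hyp s)
  have hperm : 1 / (n ! : ℝ) * ∑ π : Perm (Fin n), f (s ∘ π)
      = (∑ u ∈ typeClass s, f u) / #(typeClass s) := by
    have hfact := card_typeClass_mul_prod_factorial s
    rw [Fintype.card_fin] at hfact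
    rw [sum_perm_comp, nsmul_eq_mul, ← hfact]
    push_cast
    field_simp
  have hε' : ε / ∑ u ∈ typeClass s, P u ≤ 3 * (n + 1) ^ Fintype.card S * ε := by
    rw [div_le_iff₀ hCpos]
    nlinarith [hε.1]
  change 1 / (n ! : ℝ) * ∑ π : Perm (Fin n), f (s ∘ π) ≥ _
  linarith
end

section
/- In the setting of the previous statement, if $\max_{s^n\in\mathcal{S}^n} I(M \wedge Z_{s^n}(\mathrm{id})) \leq \varepsilon$ for some $\varepsilon>0$, then $\max_{\pi\in\Pi_n}\max_{s^n\in\mathcal{S}^n} I(M \wedge Z_{s^n}(\pi)) \leq \varepsilon$. -/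
open scoped BigOperators

/-- Shannon entropy (base 2) of a distribution on a finite set. -/
noncomputable def ent {α : Type*} [Fintype α] (p : α → ℝ) : ℝ :=
  -∑ a, p a * Real.logb 2 (p a)

/-- Mutual information (base 2) of a joint distribution on a product of finite sets. -/
noncomputable def mutInfo {α β : Type*} [Fintype α] [Fintype β] (P : α → β → ℝ) : ℝ :=
  ent (fun a => ∑ b, P a b) + ent (fun b => ∑ a, P a b)
    - ent (fun ab : α × β => P ab.1 ab.2)

lemma ent_comp_equiv {α β : Type*} [Fintype α] [Fintype β] (e : α ≃ β) (p : β → ℝ) :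
    ent (fun a => p (e a)) = ent p := by
  unfold ent
  congr 1
  exact Equiv.sum_comp e (fun b => p b * Real.logb 2 (p b))

lemma mutInfo_comp_equiv {α β γ : Type*} [Fintype α] [Fintype β] [Fintype γ]
    (e : β ≃ γ) (P : α → γ → ℝ) :
    mutInfo (fun a b => P a (e b)) = mutInfo P := by
  unfold mutInfo
  have h1 : (fun a => ∑ b, P a (e b)) = (fun a => ∑ c, P a c) := by
    funext a; exact Equiv.sum_comp e (fun c => P a c)
  have h2 : ent (fun b => ∑ a, P a (e b)) = ent fun c => ∑ a, P a c :=
    ent_comp_equiv e (fun c => ∑ a, P a c)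
  have h3 : ent (fun ab : α × β => P ab.1 (e ab.2))
      = ent (fun ac : α × γ => P ac.1 ac.2) :=
    ent_comp_equiv ((Equiv.refl α).prodCongr e) (fun ac : α × γ => P ac.1 ac.2)
  rw [h1, h2, h3]

/-- Lemma `permutations`: with `M` uniform on `J` and
`Z_{s^n}(π)` the eavesdropper output under encoder `E^π` and state sequence `s^n`,
if `max_{s^n} I(M ∧ Z_{s^n}(id)) ≤ ε` then
`max_π max_{s^n} I(M ∧ Z_{s^n}(π)) ≤ ε`. -/
theorem stmt6 {A C S J : Type*} [Fintype A] [Fintype C] [Fintype S] [Fintype J]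
    [Nonempty J] (n : ℕ) (V : S → A → C → ℝ)
    (hV0 : ∀ s a c, 0 ≤ V s a c) (hV1 : ∀ s a, ∑ c, V s a c = 1)
    (E : J → (Fin n → A) → ℝ)
    (hE0 : ∀ j x, 0 ≤ E j x) (hE1 : ∀ j, ∑ x, E j x = 1)
    (ε : ℝ) (hε : 0 < ε)
    (hyp : ∀ s : Fin n → S,
      mutInfo (fun (j : J) (z : Fin n → C) =>
        (1 / (Fintype.card J : ℝ)) * ∑ x : Fin n → A, E j x * ∏ i, V (s i) (x i) (z i))
        ≤ ε) :
    ∀ (π : Equiv.Perm (Fin n)) (s : Fin n → S),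
      mutInfo (fun (j : J) (z : Fin n → C) =>
        (1 / (Fintype.card J : ℝ)) *
          ∑ x : Fin n → A, E j (fun i => x (π.symm i)) * ∏ i, V (s i) (x i) (z i))
        ≤ ε := by
  intro π s
  set s' : Fin n → S := fun k => s (π.symm k) with hs'
  -- target permutation equiv on outputs
  set e : (Fin n → C) ≃ (Fin n → C) := Equiv.arrowCongr π (Equiv.refl C) with he
  have key : (fun (j : J) (z : Fin n → C) =>
        (1 / (Fintype.card J : ℝ)) *
          ∑ x : Fin n → A, E j (fun i => x (π.symm i)) * ∏ i, V (s i) (x i) (z i))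
      = fun (j : J) (z : Fin n → C) =>
        (1 / (Fintype.card J : ℝ)) *
          ∑ y : Fin n → A, E j y * ∏ k, V (s' k) (y k) ((e z) k) := by
    funext j z
    congr 1
    rw [← Equiv.sum_comp (Equiv.arrowCongr π.symm (Equiv.refl A))
      (fun x => E j (fun i => x (π.symm i)) * ∏ i, V (s i) (x i) (z i))]
    refine Finset.sum_congr rfl fun y _ => ?_
    have hx : ∀ i, (Equiv.arrowCongr π.symm (Equiv.refl A) y) i = y (π i) := fun i => rfl
    have h1 : (fun i => (Equiv.arrowCongr π.symm (Equiv.refl A) y) (π.symm i)) = y := by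
      funext i; simp [hx]
    rw [h1]
    congr 1
    calc ∏ i, V (s i) ((Equiv.arrowCongr π.symm (Equiv.refl A) y) i) (z i)
        = ∏ i, V (s i) (y (π i)) (z i) := by
          refine Finset.prod_congr rfl fun i _ => by rw [hx]
      _ = ∏ k, V (s (π.symm k)) (y k) (z (π.symm k)) := by
          rw [← Equiv.prod_comp π (fun k => V (s (π.symm k)) (y k) (z (π.symm k)))]
          simp
      _ = ∏ k, V (s' k) (y k) ((e z) k) := by
          refine Finset.prod_congr rfl fun k _ => ?_
          simp [hs', he, Equiv.arrowCongr]
  rw [key]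
  have := mutInfo_comp_equiv e (fun (j : J) (w : Fin n → C) =>
    (1 / (Fintype.card J : ℝ)) * ∑ y : Fin n → A, E j y * ∏ k, V (s' k) (y k) (w k))
  rw [this]
  exact hyp s'
end
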